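/- arXiv:2502.14210 — 4 statements merged into one kernel-verified Lean document; each statement's English description precedes it below -/
import Mathlib

section
/- Let B ∈ ℝ^{n×m}, A ∈ ℝ^{n×n}, R ∈ ℝ^{m×m} symmetric positive definite, and let P', P* ∈ ℝ^{n×n} be symmetric positive semidefinite. Define K' := (R + BᵀP'B)^{-1}BᵀP'A and K* := (R + BᵀP*B)^{-1}BᵀP*A. Then K' − K* = (R + BᵀP'B)^{-1}Bᵀ(P* − P')(BK* − A), and consequently ‖K' − K*‖ ≤ (‖A − BK*‖·‖B‖ / λ_min(R)) · ‖P' − P*‖ in spectral norm. -/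
open Matrix BigOperators MeasureTheory

/-- Spectral norm (operator norm induced by Euclidean norms). -/
noncomputable def sNorm {m n : ℕ} (M : Matrix (Fin m) (Fin n) ℝ) : ℝ :=
  ‖LinearMap.toContinuousLinearMap (Matrix.toEuclideanLin M)‖

/-- Frobenius norm. -/
noncomputable def fNorm {m n : ℕ} (M : Matrix (Fin m) (Fin n) ℝ) : ℝ :=
  Real.sqrt (∑ i, ∑ j, (M i j) ^ 2)

/-- `P`-induced norm: `‖X‖_P = sup_{z ≠ 0} √(zᵀXᵀPXz / zᵀPz)`. -/
noncomputable def pNorm {n : ℕ} (P X : Matrix (Fin n) (Fin n) ℝ) : ℝ :=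
  ⨆ z : {v : Fin n → ℝ // v ≠ 0},
    Real.sqrt ((z.1 ⬝ᵥ (Xᵀ * P * X).mulVec z.1) / (z.1 ⬝ᵥ P.mulVec z.1))

/-- Smallest eigenvalue of a symmetric matrix (as a Rayleigh-quotient infimum). -/
noncomputable def lamMin {n : ℕ} (M : Matrix (Fin n) (Fin n) ℝ) : ℝ :=
  ⨅ v : {v : Fin n → ℝ // v ⬝ᵥ v = 1}, v.1 ⬝ᵥ M.mulVec v.1

/-- Largest eigenvalue of a symmetric matrix (as a Rayleigh-quotient supremum). -/
noncomputable def lamMax {n : ℕ} (M : Matrix (Fin n) (Fin n) ℝ) : ℝ :=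
  ⨆ v : {v : Fin n → ℝ // v ⬝ᵥ v = 1}, v.1 ⬝ᵥ M.mulVec v.1

/-- Condition number `κ_M = λ_max(M)/λ_min(M)`. -/
noncomputable def condNum {n : ℕ} (M : Matrix (Fin n) (Fin n) ℝ) : ℝ :=
  lamMax M / lamMin M

/-- Smallest singular value. -/
noncomputable def sigMin {m n : ℕ} (M : Matrix (Fin m) (Fin n) ℝ) : ℝ :=
  Real.sqrt (lamMin (Mᵀ * M))

/-- Spectral radius: supremum of moduli of (complex) eigenvalues. -/
noncomputable def specRad {n : ℕ} (M : Matrix (Fin n) (Fin n) ℝ) : ℝ :=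
  ⨆ μ : spectrum ℂ (M.map ((↑) : ℝ → ℂ)), ‖(μ.1 : ℂ)‖

/-! Both gains solve their normal equations `(R + BᵀPB) K = BᵀPA`; subtracting the two equations,
with `R K*` eliminated through the second one, gives `(R + BᵀP'B)(K' - K*) = Bᵀ(P* - P')(BK* - A)`.
Since `R + BᵀP'B ≥ R ≥ λ_min(R)`, the coercivity estimate `c‖x‖² ≤ ⟪x, Sx⟫ ⟹ c‖x‖ ≤ ‖Sx‖`
bounds `‖(R + BᵀP'B)⁻¹‖` by `λ_min(R)⁻¹`, and submultiplicativity of the spectral norm finishes. -/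

open scoped Matrix.Norms.L2Operator RealInnerProductSpace

section RiccatiGain

variable {l m n α : Type*} [Fintype m] [DecidableEq m] [Fintype n] [CommRing α]

noncomputable def riccatiGain (R : Matrix m m α) (B : Matrix n m α) (P : Matrix n n α)
    (A : Matrix n l α) : Matrix m l α :=
  (R + Bᵀ * P * B)⁻¹ * (Bᵀ * P * A)

variable {R : Matrix m m α} {B : Matrix n m α} {P P' : Matrix n n α} (A : Matrix n l α)

theorem mul_riccatiGain (hP : IsUnit (R + Bᵀ * P * B).det) :
    (R + Bᵀ * P * B) * riccatiGain R B P A = Bᵀ * P * A :=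
  mul_nonsing_inv_cancel_left _ _ hP

theorem riccatiGain_sub_riccatiGain (hP' : IsUnit (R + Bᵀ * P' * B).det)
    (hP : IsUnit (R + Bᵀ * P * B).det) :
    riccatiGain R B P' A - riccatiGain R B P A =
      (R + Bᵀ * P' * B)⁻¹ * (Bᵀ * (P - P') * (B * riccatiGain R B P A - A)) := by
  set K := riccatiGain R B P A
  have hK : R * K = Bᵀ * P * A - Bᵀ * P * B * K :=
    eq_sub_of_add_eq (by rw [← Matrix.add_mul]; exact mul_riccatiGain A hP)
  have key : (R + Bᵀ * P' * B) * (riccatiGain R B P' A - K) =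
      Bᵀ * (P - P') * (B * K - A) := by
    rw [Matrix.mul_sub, mul_riccatiGain A hP', Matrix.add_mul, hK]
    simp only [Matrix.mul_sub, Matrix.sub_mul, Matrix.mul_assoc]
    abel
  rw [← key, nonsing_inv_mul_cancel_left _ _ hP']

end RiccatiGain

theorem mul_norm_le_of_mul_norm_sq_le_inner {E : Type*} [NormedAddCommGroup E]
    [InnerProductSpace ℝ E] {x y : E} {c : ℝ} (h : c * ‖x‖ ^ 2 ≤ ⟪x, y⟫) : c * ‖x‖ ≤ ‖y‖ := by
  rcases (norm_nonneg x).eq_or_lt' with hx | hx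
  · simp [hx]
  · refine le_of_mul_le_mul_right ?_ hx
    nlinarith [real_inner_le_norm x y]

theorem EuclideanSpace.norm_sq_eq_dotProduct_self {n : Type*} [Fintype n]
    (x : EuclideanSpace ℝ n) : ‖x‖ ^ 2 = x.ofLp ⬝ᵥ x.ofLp := by
  rw [← real_inner_self_eq_norm_sq, EuclideanSpace.inner_eq_star_dotProduct, star_trivial]

namespace Matrix

variable {n : Type*} [Fintype n] [DecidableEq n] {S : Matrix n n ℝ} {c : ℝ}

theorem isUnit_det_of_coercive (hc : 0 < c) (hS : ∀ u, c * (u ⬝ᵥ u) ≤ u ⬝ᵥ S *ᵥ u) :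
    IsUnit S.det := by
  refine isUnit_iff_ne_zero.mpr fun hdet => ?_
  obtain ⟨v, hv, hSv⟩ := exists_mulVec_eq_zero_iff.mpr hdet
  have := hS v
  rw [hSv, dotProduct_zero] at this
  exact hv (dotProduct_self_eq_zero.mp (le_antisymm (nonpos_of_mul_nonpos_right this hc)
    (by simpa using dotProduct_self_star_nonneg v)))

theorem l2_opNorm_inv_le_of_coercive (hc : 0 < c) (hS : ∀ u, c * (u ⬝ᵥ u) ≤ u ⬝ᵥ S *ᵥ u) :
    ‖S⁻¹‖ ≤ c⁻¹ := by
  rw [← l2_opNorm_toEuclideanCLM]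
  refine ContinuousLinearMap.opNorm_le_bound _ (inv_nonneg.mpr hc.le) fun w => ?_
  set x := toEuclideanCLM (𝕜 := ℝ) S⁻¹ w
  have hSx : toEuclideanCLM (𝕜 := ℝ) S x = w := by
    change (toEuclideanCLM (𝕜 := ℝ) S * toEuclideanCLM (𝕜 := ℝ) S⁻¹) w = w
    rw [← map_mul, mul_nonsing_inv _ (isUnit_det_of_coercive hc hS), map_one]
    rfl
  have := mul_norm_le_of_mul_norm_sq_le_inner (c := c) (x := x) (y := w) (by
    rw [← hSx, inner_toEuclideanCLM]
    simpa [EuclideanSpace.norm_sq_eq_dotProduct_self] using hS (WithLp.ofLp x))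
  rw [inv_mul_eq_div, le_div_iff₀ hc]
  linarith

end Matrix

theorem Matrix.l2_opNorm_transpose {𝕜 m n : Type*} [RCLike 𝕜] [TrivialStar 𝕜] [Fintype m]
    [Fintype n] [DecidableEq m] [DecidableEq n] (M : Matrix m n 𝕜) : ‖Mᵀ‖ = ‖M‖ := by
  rw [← conjTranspose_eq_transpose_of_trivial, l2_opNorm_conjTranspose]

theorem sNorm_eq_l2_opNorm {m n : ℕ} (M : Matrix (Fin m) (Fin n) ℝ) : sNorm M = ‖M‖ := rfl

section lamMin

variable {k : ℕ} {R : Matrix (Fin k) (Fin k) ℝ}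

theorem lamMin_nonneg (hR : R.PosSemidef) : 0 ≤ lamMin R :=
  Real.iInf_nonneg fun v => by simpa using hR.dotProduct_mulVec_nonneg v.1

theorem lamMin_le_dotProduct_mulVec (hR : R.PosSemidef) {v : Fin k → ℝ} (hv : v ⬝ᵥ v = 1) :
    lamMin R ≤ v ⬝ᵥ R *ᵥ v := by
  have hbdd : BddBelow (Set.range fun w : {v : Fin k → ℝ // v ⬝ᵥ v = 1} => w.1 ⬝ᵥ R *ᵥ w.1) :=
    ⟨0, by rintro _ ⟨w, rfl⟩; simpa using hR.dotProduct_mulVec_nonneg w.1⟩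
  exact ciInf_le hbdd ⟨v, hv⟩

theorem lamMin_mul_dotProduct_self_le (hR : R.PosSemidef) (u : Fin k → ℝ) :
    lamMin R * (u ⬝ᵥ u) ≤ u ⬝ᵥ R *ᵥ u := by
  rcases eq_or_ne u 0 with rfl | hu
  · simp
  set s := ‖WithLp.toLp 2 u‖
  have hs : 0 < s := norm_pos_iff.mpr (by simpa using hu)
  have huu : u ⬝ᵥ u = s ^ 2 := (EuclideanSpace.norm_sq_eq_dotProduct_self _).symm
  have h := lamMin_le_dotProduct_mulVec hR (v := s⁻¹ • u) (by
    rw [smul_dotProduct, dotProduct_smul, huu, smul_eq_mul, smul_eq_mul]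
    field_simp)
  rw [mulVec_smul, smul_dotProduct, dotProduct_smul, smul_eq_mul, smul_eq_mul] at h
  calc lamMin R * (u ⬝ᵥ u) ≤ s⁻¹ * (s⁻¹ * (u ⬝ᵥ R *ᵥ u)) * s ^ 2 := by
        rw [huu]; gcongr
    _ = u ⬝ᵥ R *ᵥ u := by field_simp

theorem lamMin_pos (hk : 0 < k) (hR : R.PosDef) : 0 < lamMin R := by
  have : Nonempty (Fin k) := ⟨⟨0, hk⟩⟩
  have hsphere {x : EuclideanSpace ℝ (Fin k)} : x ∈ Metric.sphere 0 1 ↔ x.ofLp ⬝ᵥ x.ofLp = 1 := by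
    rw [mem_sphere_zero_iff_norm, ← pow_eq_one_iff_of_nonneg (norm_nonneg _) two_ne_zero,
      EuclideanSpace.norm_sq_eq_dotProduct_self]
  let q : EuclideanSpace ℝ (Fin k) → ℝ := fun x => ⟪x, toEuclideanCLM (𝕜 := ℝ) R x⟫
  obtain ⟨x₀, hx₀, hmin⟩ := (isCompact_sphere (0 : EuclideanSpace ℝ (Fin k)) 1).exists_isMinOn
    (NormedSpace.sphere_nonempty.mpr zero_le_one) (by fun_prop : Continuous q).continuousOn
  have hx₀ne : x₀.ofLp ≠ 0 := fun h => by simpa [h] using hsphere.mp hx₀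
  have hpos : 0 < q x₀ := by
    simpa [q, inner_toEuclideanCLM] using hR.dotProduct_mulVec_pos hx₀ne
  have : Nonempty {v : Fin k → ℝ // v ⬝ᵥ v = 1} := ⟨⟨x₀.ofLp, hsphere.mp hx₀⟩⟩
  refine hpos.trans_le (le_ciInf fun ⟨v, hv⟩ => ?_)
  simpa [q, inner_toEuclideanCLM] using hmin (a := WithLp.toLp 2 v) (hsphere.mpr hv)

theorem l2_opNorm_inv_add_le_inv_lamMin (hR : R.PosDef) {Q : Matrix (Fin k) (Fin k) ℝ}
    (hQ : Q.PosSemidef) : ‖(R + Q)⁻¹‖ ≤ (lamMin R)⁻¹ := by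
  rcases Nat.eq_zero_or_pos k with rfl | hk
  -- for `k = 0` the unit sphere is empty, so `lamMin R = 0` and the bound reads `0 ≤ 0⁻¹ = 0`
  · rw [Subsingleton.elim (R + Q)⁻¹ 0, norm_zero]
    exact inv_nonneg.mpr (lamMin_nonneg hR.posSemidef)
  refine Matrix.l2_opNorm_inv_le_of_coercive (lamMin_pos hk hR) fun u => ?_
  rw [add_mulVec, dotProduct_add]
  have hQu : 0 ≤ u ⬝ᵥ Q *ᵥ u := by simpa using hQ.dotProduct_mulVec_nonneg u
  linarith [lamMin_mul_dotProduct_self_le hR.posSemidef u]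

end lamMin

/-- Exact difference formula for Riccati feedback gains and the resulting
spectral-norm bound. -/
theorem gain_difference_formula {n m : ℕ}
    (A : Matrix (Fin n) (Fin n) ℝ) (B : Matrix (Fin n) (Fin m) ℝ)
    (R : Matrix (Fin m) (Fin m) ℝ) (hR : R.PosDef)
    (P' Pstar : Matrix (Fin n) (Fin n) ℝ)
    (hP' : P'.PosSemidef) (hPstar : Pstar.PosSemidef)
    (K' Kstar : Matrix (Fin m) (Fin n) ℝ)
    (hK' : K' = (R + Bᵀ * P' * B)⁻¹ * (Bᵀ * P' * A))
    (hKstar : Kstar = (R + Bᵀ * Pstar * B)⁻¹ * (Bᵀ * Pstar * A)) :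
    K' - Kstar = (R + Bᵀ * P' * B)⁻¹ * (Bᵀ * (Pstar - P') * (B * Kstar - A)) ∧
      sNorm (K' - Kstar) ≤
        sNorm (A - B * Kstar) * sNorm B / lamMin R * sNorm (P' - Pstar) := by
  have hBPB {P : Matrix (Fin n) (Fin n) ℝ} (hP : P.PosSemidef) : (Bᵀ * P * B).PosSemidef := by
    simpa using hP.conjTranspose_mul_mul_same B
  have hdet {P : Matrix (Fin n) (Fin n) ℝ} (hP : P.PosSemidef) : IsUnit (R + Bᵀ * P * B).det :=
    (isUnit_iff_isUnit_det _).mp (hR.add_posSemidef (hBPB hP)).isUnit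
  have hdiff : K' - Kstar = (R + Bᵀ * P' * B)⁻¹ * (Bᵀ * (Pstar - P') * (B * Kstar - A)) := by
    subst hK' hKstar
    exact riccatiGain_sub_riccatiGain A (hdet hP') (hdet hPstar)
  refine ⟨hdiff, ?_⟩
  simp only [sNorm_eq_l2_opNorm]
  calc ‖K' - Kstar‖ ≤ (lamMin R)⁻¹ * (‖Bᵀ‖ * ‖Pstar - P'‖ * ‖B * Kstar - A‖) := by
        rw [hdiff]
        refine (l2_opNorm_mul _ _).trans (mul_le_mul
          (l2_opNorm_inv_add_le_inv_lamMin hR (hBPB hP')) ?_ (norm_nonneg _)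
          (inv_nonneg.mpr (lamMin_nonneg hR.posSemidef)))
        exact (l2_opNorm_mul _ _).trans
          (mul_le_mul_of_nonneg_right (l2_opNorm_mul _ _) (norm_nonneg _))
    _ = ‖A - B * Kstar‖ * ‖B‖ / lamMin R * ‖P' - Pstar‖ := by
        rw [l2_opNorm_transpose, norm_sub_rev Pstar, norm_sub_rev (B * Kstar)]
        ring
end

section
/- Let A ∈ ℝ^{n×n}, B ∈ ℝ^{n×m}, Q ∈ ℝ^{n×n}, R ∈ ℝ^{m×m} symmetric, P̃ ∈ ℝ^{n×n} symmetric positive semidefinite, K ∈ ℝ^{m×n}, and σ > 0. Define the quadratic Q-function Q(x, u) := xᵀQx + uᵀRu + (Ax + Bu)ᵀP̃(Ax + Bu). Let x₀ be a random vector in ℝⁿ with 𝔼[x₀x₀ᵀ] = Σ₀ and ‖x₀‖² ≤ C_m almost surely, and let η be an independent standard Gaussian vector on ℝ^m (mean 0, covariance I_m). Then 𝔼[ −(1/σ)·Q(x₀, −Kx₀ + ση)·η·x₀ᵀ ] = 2((R + BᵀP̃B)K − BᵀP̃A)Σ₀. -/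
open Matrix BigOperators MeasureTheory

/-- The quadratic `Q`-function `Q(x,u) = xᵀQx + uᵀRu + (Ax+Bu)ᵀP̃(Ax+Bu)`. -/
noncomputable def qFun {n m : ℕ} (A Q P : Matrix (Fin n) (Fin n) ℝ)
    (B : Matrix (Fin n) (Fin m) ℝ) (R : Matrix (Fin m) (Fin m) ℝ)
    (x : Fin n → ℝ) (u : Fin m → ℝ) : ℝ :=
  x ⬝ᵥ Q.mulVec x + u ⬝ᵥ R.mulVec u
    + (A.mulVec x + B.mulVec u) ⬝ᵥ P.mulVec (A.mulVec x + B.mulVec u)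

/-!
Expanding `Q(x, ·)` around the feedback action `-Kx` gives
`Q(x, -Kx + σy) = Q(x, -Kx) + 2σ (Lx)ᵀy + σ² yᵀ(R + BᵀP̃B)y` with `L = BᵀP̃A - (R + BᵀP̃B)K`.
Since `η` is independent of `x₀`, each term factors into a moment of `x₀` times a moment of `η`.
Multiplied by `η_i`, the constant and the quadratic term are odd in `η` and integrate to zero,
while `𝔼[η_k η_i] = δ_ki` reduces the linear term to `2σ (Lx₀)_i`. This leaves
`-2 𝔼[(Lx₀)_i x₀_j] = -2 (LΣ₀)_ij`. Boundedness of `x₀` and the Gaussian moments make every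
term integrable.
-/

lemma integral_eq_zero_of_odd {G : Type*} [MeasurableSpace G] [AddGroup G] [MeasurableNeg G]
    (μ : Measure G) [μ.IsNegInvariant] {f : G → ℝ} (hf : ∀ x, f (-x) = -f x) :
    ∫ x, f x ∂μ = 0 := by
  have h := integral_neg_eq_self f μ
  simp only [hf, integral_neg] at h
  linarith

lemma isCompact_setOf_sum_sq_le {ι : Type*} [Fintype ι] (C : ℝ) :
    IsCompact {x : ι → ℝ | ∑ i, x i ^ 2 ≤ C} := by
  refine Metric.isCompact_of_isClosed_isBounded (isClosed_le (by fun_prop) continuous_const) ?_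
  refine (Metric.isBounded_closedBall (x := 0) (r := √C)).subset fun x hx => ?_
  rw [mem_closedBall_zero_iff, pi_norm_le_iff_of_nonneg (Real.sqrt_nonneg _)]
  exact fun i => Real.abs_le_sqrt
    ((Finset.single_le_sum (fun i _ => sq_nonneg (x i)) (Finset.mem_univ i)).trans hx)

lemma Continuous.integrable_comp_of_ae_mem {Ω E : Type*} [MeasurableSpace Ω] {μ : Measure Ω}
    [IsFiniteMeasure μ] [TopologicalSpace E] [MeasurableSpace E] [OpensMeasurableSpace E]
    {X : Ω → E} {s : Set E} {f : E → ℝ} (hf : Continuous f) (hs : IsCompact s)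
    (hX : AEMeasurable X μ) (hXs : ∀ᵐ ω ∂μ, X ω ∈ s) : Integrable (fun ω => f (X ω)) μ := by
  obtain ⟨C, hC⟩ := hs.exists_bound_of_continuousOn hf.continuousOn
  exact .of_bound (hf.measurable.comp_aemeasurable hX).aestronglyMeasurable C
    (hXs.mono fun ω h => hC _ h)

lemma integral_mulVec_apply_mul_apply {Ω ι κ : Type*} [MeasurableSpace Ω] {μ : Measure Ω}
    [Fintype ι] {X : Ω → ι → ℝ} {M : Matrix ι ι ℝ}
    (hcov : ∀ a b, ∫ ω, X ω a * X ω b ∂μ = M a b)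
    (hint : ∀ a b, Integrable (fun ω => X ω a * X ω b) μ) (L : Matrix κ ι ℝ) (i : κ) (j : ι) :
    ∫ ω, (L *ᵥ X ω) i * X ω j ∂μ = (L * M) i j := by
  simp only [mulVec, dotProduct, Finset.sum_mul, mul_assoc]
  rw [integral_finsetSum _ fun a _ => (hint a j).const_mul _]
  simp only [integral_const_mul, hcov, mul_apply]

section Independence

open ProbabilityTheory

variable {Ω E F : Type*} [MeasurableSpace Ω] {μ : Measure Ω}
  [TopologicalSpace E] [MeasurableSpace E] [OpensMeasurableSpace E]
  [TopologicalSpace F] [MeasurableSpace F] [OpensMeasurableSpace F]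
  {X : Ω → E} {Y : Ω → F} {s : Set E} {f : E → ℝ} {g : F → ℝ}

lemma ProbabilityTheory.IndepFun.integrable_comp_mul_comp_of_ae_mem [IsFiniteMeasure μ]
    (hXY : IndepFun X Y μ) (hX : AEMeasurable X μ) (hY : AEMeasurable Y μ) (hs : IsCompact s)
    (hXs : ∀ᵐ ω ∂μ, X ω ∈ s) (hf : Continuous f) (hg : Continuous g)
    (hgY : Integrable g (μ.map Y)) :
    Integrable (fun ω => f (X ω) * g (Y ω)) μ :=
  (hXY.comp hf.measurable hg.measurable).integrable_mul (hf.integrable_comp_of_ae_mem hs hX hXs)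
    (hgY.comp_aemeasurable hY)

lemma ProbabilityTheory.IndepFun.integral_comp_mul_comp_eq (hXY : IndepFun X Y μ)
    (hX : AEMeasurable X μ) (hY : AEMeasurable Y μ) (hf : Continuous f) (hg : Continuous g) :
    ∫ ω, f (X ω) * g (Y ω) ∂μ = (∫ ω, f (X ω) ∂μ) * ∫ y, g y ∂(μ.map Y) := by
  rw [hXY.integral_fun_comp_mul_comp hX hY hf.aestronglyMeasurable hg.aestronglyMeasurable,
    integral_map hY hg.aestronglyMeasurable]

end Independence

section StdGaussianPi

open ProbabilityTheory
open scoped NNReal ENNReal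

instance isNegInvariant_gaussianReal_zero (v : ℝ≥0) : (gaussianReal 0 v).IsNegInvariant :=
  ⟨by rw [Measure.neg, gaussianReal_map_neg, neg_zero]⟩

noncomputable abbrev stdGaussianPi (ι : Type*) [Fintype ι] : Measure (ι → ℝ) :=
  Measure.pi fun _ : ι => gaussianReal 0 1

variable {ι : Type*} [Fintype ι]

lemma memLp_eval_stdGaussianPi (i : ι) {p : ℝ≥0∞} (hp : p ≠ ∞) :
    MemLp (fun y => y i) p (stdGaussianPi ι) :=
  (memLp_id_gaussianReal' p hp).comp_measurePreserving (measurePreserving_eval _ i)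

lemma integrable_eval_stdGaussianPi (i : ι) : Integrable (fun y => y i) (stdGaussianPi ι) :=
  memLp_one_iff_integrable.mp (memLp_eval_stdGaussianPi i ENNReal.one_ne_top)

lemma integrable_eval_mul_eval_stdGaussianPi (k i : ι) :
    Integrable (fun y => y k * y i) (stdGaussianPi ι) :=
  (memLp_eval_stdGaussianPi k (p := 2) ENNReal.ofNat_ne_top).integrable_mul
    (memLp_eval_stdGaussianPi i (p := 2) ENNReal.ofNat_ne_top)

lemma integrable_eval_mul_eval_mul_eval_stdGaussianPi (k l i : ι) :
    Integrable (fun y => y k * y l * y i) (stdGaussianPi ι) := by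
  have : ENNReal.HolderTriple 4 4 2 := ⟨by
    rw [← ENNReal.add_halves (2⁻¹ : ℝ≥0∞), ENNReal.div_eq_inv_mul,
      ← ENNReal.mul_inv (by simp) (by simp)]
    norm_num⟩
  exact ((memLp_eval_stdGaussianPi l (p := 4) ENNReal.ofNat_ne_top).mul (r := 2)
    (memLp_eval_stdGaussianPi k (p := 4) ENNReal.ofNat_ne_top)).integrable_mul
    (memLp_eval_stdGaussianPi i (p := 2) ENNReal.ofNat_ne_top)

lemma integral_eval_mul_eval_stdGaussianPi [DecidableEq ι] (k i : ι) :
    ∫ y, y k * y i ∂stdGaussianPi ι = if k = i then 1 else 0 := by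
  split_ifs with h
  · subst h
    have hvar := variance_of_integral_eq_zero aemeasurable_id
      (integral_id_gaussianReal (μ := 0) (v := 1))
    rw [integral_comp_eval (f := fun x => x * x) (by fun_prop)]
    simpa [sq, variance_id_gaussianReal] using hvar.symm
  · have hindep : IndepFun (fun y : ι → ℝ => y k) (fun y => y i) (stdGaussianPi ι) :=
      (iIndepFun_pi (X := fun _ => id) fun _ => aemeasurable_id).indepFun h
    rw [hindep.integral_fun_mul_eq_mul_integral (measurable_pi_apply k).aestronglyMeasurable
      (measurable_pi_apply i).aestronglyMeasurable]
    simp [integral_eval, integral_id_gaussianReal]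

lemma integrable_quadForm_mul_eval_stdGaussianPi (S : Matrix ι ι ℝ) (i : ι) :
    Integrable (fun y => (y ⬝ᵥ S *ᵥ y) * y i) (stdGaussianPi ι) := by
  have h : (fun y : ι → ℝ => (y ⬝ᵥ S *ᵥ y) * y i)
      = fun y => ∑ k, ∑ l, S k l * (y k * y l * y i) := by
    ext y
    simp only [dotProduct, mulVec, Finset.sum_mul, Finset.mul_sum]
    exact Finset.sum_congr rfl fun _ _ => Finset.sum_congr rfl fun _ _ => by ring
  rw [h]
  exact integrable_finsetSum _ fun k _ => integrable_finsetSum _ fun l _ =>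
    (integrable_eval_mul_eval_mul_eval_stdGaussianPi k l i).const_mul _

lemma integral_quadForm_mul_eval_stdGaussianPi (S : Matrix ι ι ℝ) (i : ι) :
    ∫ y, (y ⬝ᵥ S *ᵥ y) * y i ∂stdGaussianPi ι = 0 :=
  integral_eq_zero_of_odd _ fun y => by simp [mulVec_neg]

lemma integral_eval_stdGaussianPi (i : ι) : ∫ y, y i ∂stdGaussianPi ι = 0 :=
  integral_eq_zero_of_odd _ fun y => by simp

end StdGaussianPi

section IndependentGaussian

open ProbabilityTheory

variable {Ω E ι : Type*} [MeasurableSpace Ω] {μ : Measure Ω} [IsFiniteMeasure μ]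
  [TopologicalSpace E] [MeasurableSpace E] [OpensMeasurableSpace E] [Fintype ι]
  {X : Ω → E} {Y : Ω → ι → ℝ} {s : Set E}

theorem integral_quadratic_mul_eval_of_indepFun (hXY : IndepFun X Y μ) (hX : AEMeasurable X μ)
    (hY : AEMeasurable Y μ) (hs : IsCompact s) (hXs : ∀ᵐ ω ∂μ, X ω ∈ s)
    (hlaw : μ.map Y = stdGaussianPi ι) {a c : E → ℝ} {b : E → ι → ℝ} (ha : Continuous a)
    (hb : Continuous b) (hc : Continuous c) (S : Matrix ι ι ℝ) (i : ι) :
    ∫ ω, (a (X ω) + b (X ω) ⬝ᵥ Y ω + c (X ω) * (Y ω ⬝ᵥ S *ᵥ Y ω)) * Y ω i ∂μ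
      = ∫ ω, b (X ω) i ∂μ := by
  classical
  have hint : ∀ {f : E → ℝ} {g : (ι → ℝ) → ℝ}, Continuous f → Continuous g →
      Integrable g (stdGaussianPi ι) → Integrable (fun ω => f (X ω) * g (Y ω)) μ :=
    fun hf hg hgi => hXY.integrable_comp_mul_comp_of_ae_mem hX hY hs hXs hf hg (hlaw ▸ hgi)
  have hE : ∀ {f : E → ℝ} {g : (ι → ℝ) → ℝ}, Continuous f → Continuous g →
      ∫ ω, f (X ω) * g (Y ω) ∂μ = (∫ ω, f (X ω) ∂μ) * ∫ y, g y ∂stdGaussianPi ι :=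
    fun hf hg => by rw [hXY.integral_comp_mul_comp_eq hX hY hf hg, hlaw]
  have i₁ := hint ha (continuous_apply i) (integrable_eval_stdGaussianPi i)
  have i₂ := fun k => hint (f := fun x => b x k) (by fun_prop) (by fun_prop)
    (integrable_eval_mul_eval_stdGaussianPi k i)
  have i₃ := hint hc (by fun_prop) (integrable_quadForm_mul_eval_stdGaussianPi S i)
  have hsplit : ∀ ω, (a (X ω) + b (X ω) ⬝ᵥ Y ω + c (X ω) * (Y ω ⬝ᵥ S *ᵥ Y ω)) * Y ω i
      = a (X ω) * Y ω i + ∑ k, b (X ω) k * (Y ω k * Y ω i)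
        + c (X ω) * ((Y ω ⬝ᵥ S *ᵥ Y ω) * Y ω i) := fun ω => by
    simp only [dotProduct, add_mul, Finset.sum_mul, mul_assoc]
  simp_rw [hsplit]
  rw [integral_add (i₁.fun_add (integrable_finsetSum _ fun k _ => i₂ k)) i₃,
    integral_add i₁ (integrable_finsetSum _ fun k _ => i₂ k),
    integral_finsetSum _ fun k _ => i₂ k, hE ha (continuous_apply i),
    hE hc (g := fun y => (y ⬝ᵥ S *ᵥ y) * y i) (by fun_prop),
    Finset.sum_congr rfl fun k _ => hE (f := fun x => b x k) (g := fun y => y k * y i)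
      (by fun_prop) (by fun_prop),
    integral_eval_stdGaussianPi, integral_quadForm_mul_eval_stdGaussianPi]
  simp [integral_eval_mul_eval_stdGaussianPi]

end IndependentGaussian

lemma Matrix.IsSymm.dotProduct_mulVec_comm {ι : Type*} [Fintype ι] {M : Matrix ι ι ℝ}
    (hM : M.IsSymm) (u v : ι → ℝ) : u ⬝ᵥ M *ᵥ v = v ⬝ᵥ M *ᵥ u := by
  rw [dotProduct_mulVec, ← mulVec_transpose, hM.eq, dotProduct_comm]

lemma Matrix.IsSymm.quadForm_add {ι : Type*} [Fintype ι] {M : Matrix ι ι ℝ}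
    (hM : M.IsSymm) (u v : ι → ℝ) :
    (u + v) ⬝ᵥ M *ᵥ (u + v) = u ⬝ᵥ M *ᵥ u + 2 * (M *ᵥ u) ⬝ᵥ v + v ⬝ᵥ M *ᵥ v := by
  rw [mulVec_add, dotProduct_add, add_dotProduct, add_dotProduct, hM.dotProduct_mulVec_comm u v,
    dotProduct_comm v (M *ᵥ u)]
  ring

lemma qFun_add {n m : ℕ} (A Q P : Matrix (Fin n) (Fin n) ℝ) (B : Matrix (Fin n) (Fin m) ℝ)
    (R : Matrix (Fin m) (Fin m) ℝ) (hR : R.IsSymm) (hP : P.IsSymm)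
    (x : Fin n → ℝ) (u v : Fin m → ℝ) :
    qFun A Q P B R x (u + v) = qFun A Q P B R x u
      + 2 * (R *ᵥ u + Bᵀ *ᵥ P *ᵥ (A *ᵥ x + B *ᵥ u)) ⬝ᵥ v + v ⬝ᵥ (R + Bᵀ * P * B) *ᵥ v := by
  have hB : (P *ᵥ (A *ᵥ x + B *ᵥ u)) ⬝ᵥ B *ᵥ v = (Bᵀ *ᵥ P *ᵥ (A *ᵥ x + B *ᵥ u)) ⬝ᵥ v := by
    rw [dotProduct_mulVec, ← mulVec_transpose]
  have hBB : (B *ᵥ v) ⬝ᵥ P *ᵥ B *ᵥ v = v ⬝ᵥ (Bᵀ * P * B) *ᵥ v := by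
    rw [← mulVec_mulVec, ← mulVec_mulVec, dotProduct_mulVec v, vecMul_transpose, dotProduct_comm]
  simp only [qFun, mulVec_add B, ← add_assoc (A *ᵥ x), hR.quadForm_add, hP.quadForm_add, hB, hBB,
    add_mulVec, dotProduct_add, add_dotProduct]
  ring

lemma qFun_neg_mulVec_add_smul {n m : ℕ} (A Q P : Matrix (Fin n) (Fin n) ℝ)
    (B : Matrix (Fin n) (Fin m) ℝ) (R : Matrix (Fin m) (Fin m) ℝ) (K : Matrix (Fin m) (Fin n) ℝ)
    (hR : R.IsSymm) (hP : P.IsSymm) (σ : ℝ) (x : Fin n → ℝ) (y : Fin m → ℝ) :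
    qFun A Q P B R x (-(K *ᵥ x) + σ • y) = qFun A Q P B R x (-(K *ᵥ x))
      + 2 * σ * ((Bᵀ * P * A - (R + Bᵀ * P * B) * K) *ᵥ x) ⬝ᵥ y
      + σ ^ 2 * y ⬝ᵥ (R + Bᵀ * P * B) *ᵥ y := by
  have hgain : R *ᵥ -(K *ᵥ x) + Bᵀ *ᵥ P *ᵥ (A *ᵥ x + B *ᵥ -(K *ᵥ x))
      = (Bᵀ * P * A - (R + Bᵀ * P * B) * K) *ᵥ x := by
    simp only [mulVec_neg, mulVec_add, sub_mulVec, add_mulVec, Matrix.add_mul, mulVec_mulVec,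
      Matrix.mul_assoc]
    abel
  rw [qFun_add A Q P B R hR hP, hgain, dotProduct_smul, mulVec_smul, dotProduct_smul,
    smul_dotProduct, smul_eq_mul, smul_eq_mul, smul_eq_mul]
  ring

lemma neg_one_div_mul_qFun_mul_eq {n m : ℕ} (A Q P : Matrix (Fin n) (Fin n) ℝ)
    (B : Matrix (Fin n) (Fin m) ℝ) (R : Matrix (Fin m) (Fin m) ℝ) (K : Matrix (Fin m) (Fin n) ℝ)
    (hR : R.IsSymm) (hP : P.IsSymm) {σ : ℝ} (hσ : σ ≠ 0) (x : Fin n → ℝ) (y : Fin m → ℝ)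
    (i : Fin m) (j : Fin n) :
    -(1 / σ) * qFun A Q P B R x (-(K *ᵥ x) + σ • y) * y i * x j
      = (-(1 / σ) * qFun A Q P B R x (-(K *ᵥ x)) * x j
        + ((-2 * x j) • (Bᵀ * P * A - (R + Bᵀ * P * B) * K) *ᵥ x) ⬝ᵥ y
        + -σ * x j * (y ⬝ᵥ (R + Bᵀ * P * B) *ᵥ y)) * y i := by
  rw [qFun_neg_mulVec_add_smul A Q P B R K hR hP, smul_dotProduct, smul_eq_mul]
  field_simp
  ring

theorem gradient_estimate_unbiased_general {n m : ℕ}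
    (A Q Ptil Sigma0 : Matrix (Fin n) (Fin n) ℝ) (B : Matrix (Fin n) (Fin m) ℝ)
    (R : Matrix (Fin m) (Fin m) ℝ) (K : Matrix (Fin m) (Fin n) ℝ)
    (hR : R.IsSymm) (hPtil : Ptil.PosSemidef)
    (σ : ℝ) (hσ : 0 < σ) (C_m : ℝ)
    {Ω : Type*} [MeasurableSpace Ω] (ℙ : Measure Ω) [IsProbabilityMeasure ℙ]
    (x₀ : Ω → (Fin n → ℝ)) (η : Ω → (Fin m → ℝ))
    (hx₀meas : Measurable x₀) (hηmeas : Measurable η)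
    (hcov : ∀ i j, ∫ ω, x₀ ω i * x₀ ω j ∂ℙ = Sigma0 i j)
    (hbdd : ∀ᵐ ω ∂ℙ, ∑ i, (x₀ ω i) ^ 2 ≤ C_m)
    (hη : Measure.map η ℙ =
      Measure.pi fun _ : Fin m => ProbabilityTheory.gaussianReal 0 1)
    (hindep : ProbabilityTheory.IndepFun x₀ η ℙ) :
    ∀ i j, (∫ ω, -(1 / σ) * qFun A Q Ptil B R (x₀ ω) (-(K.mulVec (x₀ ω)) + σ • η ω)
        * η ω i * x₀ ω j ∂ℙ)
      = ((2 : ℝ) • (((R + Bᵀ * Ptil * B) * K - Bᵀ * Ptil * A) * Sigma0)) i j := by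
  intro i j
  have hP : Ptil.IsSymm := by simpa using hPtil.isHermitian
  have hs := isCompact_setOf_sum_sq_le (ι := Fin n) C_m
  simp_rw [neg_one_div_mul_qFun_mul_eq A Q Ptil B R K hR hP hσ.ne']
  set L := Bᵀ * Ptil * A - (R + Bᵀ * Ptil * B) * K
  rw [integral_quadratic_mul_eval_of_indepFun hindep hx₀meas.aemeasurable hηmeas.aemeasurable hs
    hbdd hη (a := fun x => -(1 / σ) * qFun A Q Ptil B R x (-(K *ᵥ x)) * x j)
    (b := fun x => (-2 * x j) • L *ᵥ x) (c := fun x => -σ * x j)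
    (by unfold qFun; fun_prop) (by fun_prop) (by fun_prop)]
  simp only [Pi.smul_apply, smul_eq_mul, mul_right_comm _ (x₀ _ j), mul_assoc, integral_const_mul,
    integral_mulVec_apply_mul_apply hcov fun a b =>
      (continuous_apply a).mul (continuous_apply b) |>.integrable_comp_of_ae_mem hs
        hx₀meas.aemeasurable hbdd]
  simp only [L, Matrix.smul_apply, Matrix.sub_mul, Matrix.sub_apply, smul_eq_mul]
  ring

/-- Unbiasedness of the one-point gradient estimate:
`𝔼[ −(1/σ)·Q(x₀, −Kx₀+ση)·η·x₀ᵀ ] = 2((R + BᵀP̃B)K − BᵀP̃A)Σ₀`, entrywise. -/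
theorem gradient_estimate_unbiased {n m : ℕ}
    (A Q Ptil Sigma0 : Matrix (Fin n) (Fin n) ℝ) (B : Matrix (Fin n) (Fin m) ℝ)
    (R : Matrix (Fin m) (Fin m) ℝ) (K : Matrix (Fin m) (Fin n) ℝ)
    (hQ : Q.IsSymm) (hR : R.IsSymm) (hPtil : Ptil.PosSemidef)
    (σ : ℝ) (hσ : 0 < σ) (C_m : ℝ)
    {Ω : Type*} [MeasurableSpace Ω] (ℙ : Measure Ω) [IsProbabilityMeasure ℙ]
    (x₀ : Ω → (Fin n → ℝ)) (η : Ω → (Fin m → ℝ))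
    (hx₀meas : Measurable x₀) (hηmeas : Measurable η)
    (hcov : ∀ i j, ∫ ω, x₀ ω i * x₀ ω j ∂ℙ = Sigma0 i j)
    (hbdd : ∀ᵐ ω ∂ℙ, ∑ i, (x₀ ω i) ^ 2 ≤ C_m)
    (hη : Measure.map η ℙ =
      Measure.pi fun _ : Fin m => ProbabilityTheory.gaussianReal 0 1)
    (hindep : ProbabilityTheory.IndepFun x₀ η ℙ) :
    ∀ i j, (∫ ω, -(1 / σ) * qFun A Q Ptil B R (x₀ ω) (-(K.mulVec (x₀ ω)) + σ • η ω)
        * η ω i * x₀ ω j ∂ℙ)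
      = ((2 : ℝ) • (((R + Bᵀ * Ptil * B) * K - Bᵀ * Ptil * A) * Sigma0)) i j :=
  gradient_estimate_unbiased_general A Q Ptil Sigma0 B R K hR hPtil σ hσ C_m ℙ x₀ η hx₀meas hηmeas
    hcov hbdd hη hindep
end

section
/- Let Q ∈ ℝ^{n×n}, R ∈ ℝ^{m×m}, and Σ₀ ∈ ℝ^{n×n} be symmetric positive definite, let P̃ ∈ ℝ^{n×n} be symmetric positive semidefinite, and let A ∈ ℝ^{n×n}, B ∈ ℝ^{n×m}. Define J̃(K) := tr((Q + KᵀRK + (A − BK)ᵀP̃(A − BK))Σ₀) for K ∈ ℝ^{m×n}. Then for every K, ‖K‖_F² ≤ J̃(K) / (σ_min(Σ₀)·σ_min(R)), where ‖·‖_F is the Frobenius norm. -/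
open Matrix BigOperators MeasureTheory

/-!
The cost splits as `J̃(K) = tr((Q + (A - BK)ᵀ P̃ (A - BK)) Σ₀) + tr(Kᵀ R K Σ₀)`, and the first
summand is nonnegative because the trace of a product of positive semidefinite matrices is
nonnegative (conjugate by a square root). The same fact gives `c · tr X ≤ tr (M X)` whenever
`M - c • 1` and `X` are positive semidefinite. For positive definite `M`, the Rayleigh infimum
`λ_min(M)` is the least eigenvalue, and evaluating the infimum defining `σ_min(M)² = λ_min(MᵀM)`
at a corresponding unit eigenvector gives `σ_min(M) ≤ λ_min(M)`, so `M - σ_min(M) • 1` is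
positive semidefinite. Hence
`tr(Kᵀ R K Σ₀) = tr(R · K Σ₀ Kᵀ) ≥ σ_min(R) tr(Σ₀ · Kᵀ K) ≥ σ_min(R) σ_min(Σ₀) ‖K‖_F²`.
-/

open scoped MatrixOrder

namespace Matrix

variable {ι : Type*} [Fintype ι] [DecidableEq ι]

theorem PosSemidef.trace_mul_nonneg {S X : Matrix ι ι ℝ} (hS : S.PosSemidef)
    (hX : X.PosSemidef) : 0 ≤ (S * X).trace := by
  have hsqrt : (CFC.sqrt S)ᴴ = CFC.sqrt S := (CFC.sqrt_nonneg S).posSemidef.1.eq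
  have hconj : (S * X).trace = (CFC.sqrt S * X * (CFC.sqrt S)ᴴ).trace := by
    conv_lhs => rw [← CFC.sqrt_mul_sqrt_self S hS.nonneg]
    rw [hsqrt, Matrix.mul_assoc, trace_mul_comm]
  exact hconj ▸ (hX.mul_mul_conjTranspose_same _).trace_nonneg

theorem mul_trace_le_trace_mul_of_posSemidef_sub {M X : Matrix ι ι ℝ} {c : ℝ}
    (hM : (M - c • 1).PosSemidef) (hX : X.PosSemidef) : c * X.trace ≤ (M * X).trace := by
  have := hM.trace_mul_nonneg hX
  rwa [sub_mul, smul_mul_assoc, one_mul, trace_sub, trace_smul, smul_eq_mul, sub_nonneg] at this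

theorem mul_dotProduct_self_le_of_posSemidef_sub {M : Matrix ι ι ℝ} {c : ℝ}
    (hM : (M - c • 1).PosSemidef) (v : ι → ℝ) : c * (v ⬝ᵥ v) ≤ v ⬝ᵥ M *ᵥ v := by
  have := hM.dotProduct_mulVec_nonneg v
  rwa [star_trivial, sub_mulVec, smul_mulVec, one_mulVec, dotProduct_sub, dotProduct_smul,
    smul_eq_mul, sub_nonneg] at this

theorem IsHermitian.posSemidef_sub_smul_one {M : Matrix ι ι ℝ} (hM : M.IsHermitian) {c : ℝ}
    (hc : ∀ i, c ≤ hM.eigenvalues i) : (M - c • 1).PosSemidef := by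
  rw [← le_iff, ← Algebra.algebraMap_eq_smul_one,
    algebraMap_le_iff_le_spectrum hM.isSelfAdjoint, hM.spectrum_real_eq_range_eigenvalues]
  rintro _ ⟨i, rfl⟩
  exact hc i

theorem IsHermitian.dotProduct_eigenvectorBasis_self {M : Matrix ι ι ℝ} (hM : M.IsHermitian)
    (i : ι) : ⇑(hM.eigenvectorBasis i) ⬝ᵥ ⇑(hM.eigenvectorBasis i) = 1 := by
  have := real_inner_self_eq_norm_sq (hM.eigenvectorBasis i)
  rwa [EuclideanSpace.inner_eq_star_dotProduct, star_trivial,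
    hM.eigenvectorBasis.orthonormal.1 i, one_pow] at this

end Matrix

section Rayleigh

variable {n : ℕ} {M : Matrix (Fin n) (Fin n) ℝ}

theorem lamMin_le_dotProduct_mulVec_s7 {c : ℝ} (hc : (M - c • 1).PosSemidef) {v : Fin n → ℝ}
    (hv : v ⬝ᵥ v = 1) : lamMin M ≤ v ⬝ᵥ M *ᵥ v := by
  refine ciInf_le ⟨c, ?_⟩ (⟨v, hv⟩ : {v : Fin n → ℝ // v ⬝ᵥ v = 1})
  rintro _ ⟨w, rfl⟩
  simpa [w.2] using mul_dotProduct_self_le_of_posSemidef_sub hc w.1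

theorem le_lamMin [NeZero n] {c : ℝ} (hc : (M - c • 1).PosSemidef) : c ≤ lamMin M := by
  have : Nonempty {v : Fin n → ℝ // v ⬝ᵥ v = 1} := ⟨⟨Pi.single 0 1, by simp⟩⟩
  refine le_ciInf fun v => ?_
  simpa [v.2] using mul_dotProduct_self_le_of_posSemidef_sub hc v.1

theorem Matrix.IsHermitian.lamMin_eq_inf'_eigenvalues [NeZero n] (hM : M.IsHermitian) :
    lamMin M = Finset.univ.inf' Finset.univ_nonempty hM.eigenvalues := by
  have hlow : (M - Finset.univ.inf' Finset.univ_nonempty hM.eigenvalues • 1).PosSemidef :=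
    hM.posSemidef_sub_smul_one fun i => Finset.inf'_le _ (Finset.mem_univ i)
  refine le_antisymm ?_ (le_lamMin hlow)
  obtain ⟨i, -, hi⟩ := Finset.exists_mem_eq_inf' Finset.univ_nonempty hM.eigenvalues
  calc lamMin M ≤ _ ⬝ᵥ M *ᵥ _ := lamMin_le_dotProduct_mulVec_s7 hlow
        (hM.dotProduct_eigenvectorBasis_self i)
    _ = _ := by
      rw [hM.mulVec_eigenvectorBasis, dotProduct_smul, hM.dotProduct_eigenvectorBasis_self,
        smul_eq_mul, mul_one, hi]

theorem Matrix.IsHermitian.posSemidef_sub_lamMin_smul_one [NeZero n] (hM : M.IsHermitian) :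
    (M - lamMin M • 1).PosSemidef :=
  hM.posSemidef_sub_smul_one fun i =>
    hM.lamMin_eq_inf'_eigenvalues ▸ Finset.inf'_le hM.eigenvalues (Finset.mem_univ i)

theorem Matrix.PosDef.lamMin_pos [NeZero n] (hM : M.PosDef) : 0 < lamMin M := by
  rw [hM.isHermitian.lamMin_eq_inf'_eigenvalues, Finset.lt_inf'_iff]
  exact fun i _ => hM.eigenvalues_pos i

theorem Matrix.PosDef.sigMin_pos [NeZero n] (hM : M.PosDef) : 0 < sigMin M := by
  have hMM : (Mᵀ * M).PosDef := conjTranspose_mul_self M (mulVec_injective_iff_isUnit.2 hM.isUnit)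
  exact Real.sqrt_pos.2 hMM.lamMin_pos

theorem Matrix.PosDef.sigMin_le_lamMin [NeZero n] (hM : M.PosDef) : sigMin M ≤ lamMin M := by
  obtain ⟨i, -, hi⟩ := Finset.exists_mem_eq_inf' Finset.univ_nonempty hM.isHermitian.eigenvalues
  rw [← hM.isHermitian.lamMin_eq_inf'_eigenvalues] at hi
  set u := ⇑(hM.isHermitian.eigenvectorBasis i)
  have hMM : (Mᵀ * M - (0 : ℝ) • 1).PosSemidef := by
    simpa using posSemidef_conjTranspose_mul_self M
  have hMu : M *ᵥ u = lamMin M • u := hi ▸ hM.isHermitian.mulVec_eigenvectorBasis i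
  have hu : u ⬝ᵥ u = 1 := hM.isHermitian.dotProduct_eigenvectorBasis_self i
  have hsq : lamMin (Mᵀ * M) ≤ lamMin M ^ 2 := by
    calc lamMin (Mᵀ * M) ≤ u ⬝ᵥ (Mᵀ * M) *ᵥ u := lamMin_le_dotProduct_mulVec_s7 hMM hu
      _ = lamMin M ^ 2 := by
        rw [← mulVec_mulVec, dotProduct_mulVec, vecMul_transpose, hMu, smul_dotProduct,
          dotProduct_smul, hu, smul_eq_mul, smul_eq_mul, mul_one, sq]
  exact Real.sqrt_le_iff.2 ⟨hM.lamMin_pos.le, hsq⟩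

theorem Matrix.PosDef.posSemidef_sub_sigMin_smul_one [NeZero n] (hM : M.PosDef) :
    (M - sigMin M • 1).PosSemidef := by
  have hgap : ((lamMin M - sigMin M) • (1 : Matrix (Fin n) (Fin n) ℝ)).PosSemidef :=
    PosSemidef.one.smul (sub_nonneg.2 hM.sigMin_le_lamMin)
  have := hM.isHermitian.posSemidef_sub_lamMin_smul_one.add hgap
  rwa [sub_smul, ← add_sub_assoc, sub_add_cancel] at this

end Rayleigh

theorem fNorm_sq_eq_trace {m n : ℕ} (K : Matrix (Fin m) (Fin n) ℝ) :
    fNorm K ^ 2 = (Kᵀ * K).trace := by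
  rw [fNorm, Real.sq_sqrt (by positivity), trace, Finset.sum_comm]
  simp [mul_apply, sq]

theorem sigMin_mul_sigMin_mul_fNorm_sq_le_trace {m n : ℕ} [NeZero m] [NeZero n]
    {R : Matrix (Fin m) (Fin m) ℝ} {S : Matrix (Fin n) (Fin n) ℝ} (hR : R.PosDef)
    (hS : S.PosDef) (K : Matrix (Fin m) (Fin n) ℝ) :
    sigMin S * sigMin R * fNorm K ^ 2 ≤ (Kᵀ * R * K * S).trace := by
  have hKSK : (K * S * Kᵀ).PosSemidef := by
    simpa using hS.posSemidef.mul_mul_conjTranspose_same K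
  have hKK : (Kᵀ * K).PosSemidef := by simpa using posSemidef_conjTranspose_mul_self K
  calc sigMin S * sigMin R * fNorm K ^ 2
      = sigMin R * (sigMin S * (Kᵀ * K).trace) := by rw [fNorm_sq_eq_trace]; ring
    _ ≤ sigMin R * (S * (Kᵀ * K)).trace := by
      gcongr
      · exact hR.sigMin_pos.le
      · exact mul_trace_le_trace_mul_of_posSemidef_sub hS.posSemidef_sub_sigMin_smul_one hKK
    _ = sigMin R * (K * S * Kᵀ).trace := by
      rw [← Matrix.mul_assoc, trace_mul_comm, Matrix.mul_assoc]
    _ ≤ (R * (K * S * Kᵀ)).trace :=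
      mul_trace_le_trace_mul_of_posSemidef_sub hR.posSemidef_sub_sigMin_smul_one hKSK
    _ = (Kᵀ * R * K * S).trace := by
      rw [← Matrix.mul_assoc, trace_mul_cycle, ← Matrix.mul_assoc]

/-- Sublemma: bound on the size of policies with bounded cost:
`‖K‖_F² ≤ J̃(K) / (σ_min(Σ₀)·σ_min(R))`. -/
theorem policy_size_bound {n m : ℕ}
    (A Ptil Sigma0 Q : Matrix (Fin n) (Fin n) ℝ) (B : Matrix (Fin n) (Fin m) ℝ)
    (R : Matrix (Fin m) (Fin m) ℝ)
    (hQ : Q.PosDef) (hR : R.PosDef) (hSigma0 : Sigma0.PosDef)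
    (hPtil : Ptil.PosSemidef)
    (K : Matrix (Fin m) (Fin n) ℝ) :
    fNorm K ^ 2 ≤
      ((Q + Kᵀ * R * K + (A - B * K)ᵀ * Ptil * (A - B * K)) * Sigma0).trace
        / (sigMin Sigma0 * sigMin R) := by
  have hcost : 0 ≤ ((Q + (A - B * K)ᵀ * Ptil * (A - B * K)) * Sigma0).trace := by
    refine PosSemidef.trace_mul_nonneg (hQ.posSemidef.add ?_) hSigma0.posSemidef
    simpa using hPtil.conjTranspose_mul_mul_same (A - B * K)
  have hsplit : ((Q + Kᵀ * R * K + (A - B * K)ᵀ * Ptil * (A - B * K)) * Sigma0).trace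
      = ((Q + (A - B * K)ᵀ * Ptil * (A - B * K)) * Sigma0).trace
        + (Kᵀ * R * K * Sigma0).trace := by
    rw [add_right_comm, add_mul, trace_add]
  have hKRK : 0 ≤ (Kᵀ * R * K * Sigma0).trace := by
    refine PosSemidef.trace_mul_nonneg ?_ hSigma0.posSemidef
    simpa using hR.posSemidef.conjTranspose_mul_mul_same K
  rw [hsplit]
  by_cases hdim : n = 0 ∨ m = 0
  · -- `sigMin` is the junk value `0` in dimension zero, but then `K` is empty
    have hK : fNorm K ^ 2 = 0 := by rcases hdim with rfl | rfl <;> simp [fNorm]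
    rw [hK]
    exact div_nonneg (by linarith) (mul_nonneg (Real.sqrt_nonneg _) (Real.sqrt_nonneg _))
  · rw [not_or] at hdim
    have : NeZero n := ⟨hdim.1⟩
    have : NeZero m := ⟨hdim.2⟩
    rw [le_div_iff₀ (mul_pos hSigma0.sigMin_pos hR.sigMin_pos), mul_comm]
    linarith [sigMin_mul_sigMin_mul_fNorm_sq_le_trace hR hSigma0 K]
end

section
/- Let A ∈ ℝ^{n×n}, B ∈ ℝ^{n×m}, Q ∈ ℝ^{n×n}, R ∈ ℝ^{m×m} symmetric positive semidefinite, Q_N ∈ ℝ^{n×n} symmetric, a > 0, and let P̃ ∈ ℝ^{n×n} be symmetric positive semidefinite with ‖P̃‖ ≤ ‖Q_N‖ + a. Fix σ > 0, C_m > 0, C̃ > 0, a vector x₀ ∈ ℝⁿ with ‖x₀‖² ≤ C_m, and K ∈ ℝ^{m×n} with ‖K‖_F² ≤ C̃. Define Q(x,u) := xᵀQx + uᵀRu + (Ax+Bu)ᵀP̃(Ax+Bu) and the gradient estimate G(η) := −(1/σ)·Q(x₀, −Kx₀ + ση)·η·x₀ᵀ. Set ξ₁ := (‖Q‖ + 2‖R‖C̃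 + 2(‖Q_N‖ + a)(‖A‖² + 2‖B‖²C̃))·C_m^{3/2}, ξ₂ := 2(‖R‖ + 2(‖Q_N‖ + a)‖B‖²)·C_m^{1/2}, and ξ₃ := ξ₁²m/σ² + 2ξ₁ξ₂·m(m+2) + σ²ξ₂²·m(m+2)(m+4). Then for η a standard Gaussian vector on ℝ^m, 𝔼_η[‖G(η)‖_F²] ≤ ξ₃. -/
/-!
With `u = -K x₀ + σ η` one has `‖G(η)‖_F² = σ⁻² Q(x₀, u)² ‖η‖² ‖x₀‖²`. Bounding each quadratic
form of `Q` by an operator norm and using `‖v + w‖² ≤ 2‖v‖² + 2‖w‖²` twice gives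
`0 ≤ Q(x₀, u) ≤ κ C_m + β σ² ‖η‖²`, where `ξ₁ = κ C_m^{3/2}` and `ξ₂ = β C_m^{1/2}`. So `‖G(η)‖_F²`
is dominated by a cubic polynomial in the chi-square variable `‖η‖²`, whose moments
`m, m(m+2), m(m+2)(m+4)` follow by induction on `m` from the Gaussian moments `1, 3, 15`,
splitting off one coordinate at a time.
-/

open Matrix BigOperators MeasureTheory

open Finset WithLp ProbabilityTheory Real
open scoped Nat

lemma integrable_pow_gaussianReal (p : ℕ) :
    Integrable (fun x : ℝ => x ^ p) (gaussianReal 0 1) :=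
  (memLp_id_gaussianReal p).integrable_norm_pow'.mono' (by fun_prop)
    (Filter.Eventually.of_forall fun x => by simp)

-- At `k = 0` the truncated subtraction gives `0‼ = 1`, as it should.
lemma integral_pow_two_mul_gaussianReal (k : ℕ) :
    ∫ x, x ^ (2 * k) ∂gaussianReal 0 1 = (2 * k - 1 : ℕ)‼ := by
  have hpdf (x : ℝ) : gaussianPDFReal 0 1 x • x ^ (2 * k)
      = (√(2 * π))⁻¹ * (|x| ^ ((2 * k : ℕ) : ℝ) * exp (-(1 / 2) * |x| ^ (2 : ℝ))) := by
    rw [gaussianPDFReal_def, rpow_natCast, rpow_two, sq_abs, pow_mul, pow_mul,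
      sq_abs, smul_eq_mul]
    simp only [NNReal.coe_one, mul_one, sub_zero]
    ring_nf
  have hq : (-1 : ℝ) < (2 * k : ℕ) := by linarith [(2 * k).cast_nonneg (α := ℝ)]
  rw [integral_gaussianReal_eq_integral_smul one_ne_zero]
  simp_rw [hpdf]
  rw [integral_const_mul,
    integral_comp_abs (f := fun x => x ^ ((2 * k : ℕ) : ℝ) * exp (-(1 / 2) * x ^ (2 : ℝ))),
    integral_rpow_mul_exp_neg_mul_rpow two_pos hq one_half_pos]
  have hΓ : ((2 * k : ℕ) + 1 : ℝ) / 2 = k + 1 / 2 := by push_cast; ring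
  have h2 : (1 / 2 : ℝ) ^ (-((2 * k : ℕ) + 1 : ℝ) / 2) = 2 ^ k * √2 := by
    rw [neg_div, hΓ, one_div, inv_rpow zero_le_two, rpow_neg zero_le_two, inv_inv,
      rpow_add two_pos, rpow_natCast, ← one_div, ← sqrt_eq_rpow]
  rw [hΓ, h2, Gamma_nat_add_half, sqrt_mul zero_le_two]
  have : (0 : ℝ) < √2 := by positivity
  have : (0 : ℝ) < √π := by positivity
  field_simp

section Product

variable {α β : Type*} [MeasurableSpace α] [MeasurableSpace β] {μ : Measure α} {ν : Measure β}
  {f : α → ℝ} {g : β → ℝ} {k : ℕ}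

lemma integrable_add_pow_prod (hf : ∀ j ≤ k, Integrable (fun x => f x ^ j) μ)
    (hg : ∀ j ≤ k, Integrable (fun y => g y ^ j) ν) :
    Integrable (fun z : α × β => (f z.1 + g z.2) ^ k) (μ.prod ν) := by
  simp_rw [add_pow]
  refine integrable_finsetSum _ fun j hj => ?_
  have hj : j ≤ k := Nat.lt_succ_iff.mp (mem_range.mp hj)
  exact ((hf j hj).mul_prod (hg (k - j) (Nat.sub_le k j))).mul_const _

lemma integral_add_pow_prod [SFinite μ] [SFinite ν] (hf : ∀ j ≤ k, Integrable (fun x => f x ^ j) μ)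
    (hg : ∀ j ≤ k, Integrable (fun y => g y ^ j) ν) :
    ∫ z, (f z.1 + g z.2) ^ k ∂(μ.prod ν)
      = ∑ j ∈ range (k + 1), (∫ x, f x ^ j ∂μ) * (∫ y, g y ^ (k - j) ∂ν) * k.choose j := by
  simp_rw [add_pow]
  rw [integral_finsetSum]
  · refine sum_congr rfl fun j _ => ?_
    rw [integral_mul_const, integral_prod_mul (fun x => f x ^ j) (fun y => g y ^ (k - j))]
  · intro j hj
    have hj : j ≤ k := Nat.lt_succ_iff.mp (mem_range.mp hj)
    exact ((hf j hj).mul_prod (hg (k - j) (Nat.sub_le k j))).mul_const _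

end Product

section GaussianPi

variable {m : ℕ}

noncomputable abbrev gaussianPi (m : ℕ) : Measure (Fin m → ℝ) := Measure.pi fun _ => gaussianReal 0 1

lemma integral_gaussianPi_succ (F : (Fin (m + 1) → ℝ) → ℝ) :
    ∫ η, F η ∂gaussianPi (m + 1)
      = ∫ z, F (Fin.cons z.1 z.2) ∂(gaussianReal 0 1).prod (gaussianPi m) := by
  rw [← (measurePreserving_piFinSuccAbove (fun _ => gaussianReal 0 1) 0).symm.integral_comp']
  simp [MeasurableEquiv.piFinSuccAbove_symm_apply, Fin.insertNthEquiv]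

lemma integrable_gaussianPi_succ_iff (F : (Fin (m + 1) → ℝ) → ℝ) :
    Integrable F (gaussianPi (m + 1))
      ↔ Integrable (fun z => F (Fin.cons z.1 z.2)) ((gaussianReal 0 1).prod (gaussianPi m)) := by
  rw [← (measurePreserving_piFinSuccAbove (fun _ => gaussianReal 0 1) 0).symm.integrable_comp_emb
    (MeasurableEquiv.measurableEmbedding _)]
  simp [Function.comp_def, MeasurableEquiv.piFinSuccAbove_symm_apply, Fin.insertNthEquiv]

lemma sum_sq_cons (x : ℝ) (y : Fin m → ℝ) :
    ∑ i, (Fin.cons x y : Fin (m + 1) → ℝ) i ^ 2 = x ^ 2 + ∑ i, y i ^ 2 := by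
  simp [Fin.sum_univ_succ]

lemma integrable_sum_sq_pow_gaussianPi (m k : ℕ) :
    Integrable (fun η : Fin m → ℝ => (∑ i, η i ^ 2) ^ k) (gaussianPi m) := by
  induction m generalizing k with
  | zero => simp
  | succ m ih =>
    rw [integrable_gaussianPi_succ_iff]
    simp_rw [sum_sq_cons]
    refine integrable_add_pow_prod (f := fun x => x ^ 2) (fun j _ => ?_) (fun j _ => ih j)
    simpa only [← pow_mul] using integrable_pow_gaussianReal (2 * j)

lemma integral_sum_sq_pow_gaussianPi_succ (m k : ℕ) :
    ∫ η, (∑ i, η i ^ 2) ^ k ∂gaussianPi (m + 1)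
      = ∑ j ∈ range (k + 1),
          (2 * j - 1 : ℕ)‼ * (∫ y, (∑ i, y i ^ 2) ^ (k - j) ∂gaussianPi m) * k.choose j := by
  rw [integral_gaussianPi_succ]
  simp_rw [sum_sq_cons]
  rw [integral_add_pow_prod (f := fun x => x ^ 2)
    (fun j _ => by simpa only [← pow_mul] using integrable_pow_gaussianReal (2 * j))
    (fun j _ => integrable_sum_sq_pow_gaussianPi m j)]
  simp_rw [← pow_mul, integral_pow_two_mul_gaussianReal]

lemma integral_sum_sq_gaussianPi (m : ℕ) :
    ∫ η, ∑ i, η i ^ 2 ∂gaussianPi m = m := by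
  induction m with
  | zero => simp
  | succ m ih =>
    simpa [sum_range_succ, ih, add_comm] using integral_sum_sq_pow_gaussianPi_succ m 1

lemma integral_sum_sq_sq_gaussianPi (m : ℕ) :
    ∫ η, (∑ i, η i ^ 2) ^ 2 ∂gaussianPi m = m * (m + 2) := by
  induction m with
  | zero => simp
  | succ m ih =>
    rw [integral_sum_sq_pow_gaussianPi_succ]
    norm_num [sum_range_succ, Nat.doubleFactorial, ih, integral_sum_sq_gaussianPi]
    ring

lemma integral_sum_sq_pow_three_gaussianPi (m : ℕ) :
    ∫ η, (∑ i, η i ^ 2) ^ 3 ∂gaussianPi m = m * (m + 2) * (m + 4) := by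
  induction m with
  | zero => simp
  | succ m ih =>
    rw [integral_sum_sq_pow_gaussianPi_succ]
    norm_num [sum_range_succ, Nat.doubleFactorial, ih, integral_sum_sq_gaussianPi,
      integral_sum_sq_sq_gaussianPi]
    ring

lemma integrable_and_integral_cubic_sum_sq_gaussianPi (a b c : ℝ) :
    Integrable (fun η : Fin m → ℝ => a * ∑ i, η i ^ 2 + b * (∑ i, η i ^ 2) ^ 2
      + c * (∑ i, η i ^ 2) ^ 3) (gaussianPi m)
    ∧ ∫ η, a * ∑ i, η i ^ 2 + b * (∑ i, η i ^ 2) ^ 2 + c * (∑ i, η i ^ 2) ^ 3 ∂gaussianPi m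
      = a * m + b * (m * (m + 2)) + c * (m * (m + 2) * (m + 4)) := by
  have h1 : Integrable (fun η : Fin m → ℝ => a * ∑ i, η i ^ 2) (gaussianPi m) := by
    simpa using (integrable_sum_sq_pow_gaussianPi m 1).const_mul a
  have h2 := (integrable_sum_sq_pow_gaussianPi m 2).const_mul b
  have h3 := (integrable_sum_sq_pow_gaussianPi m 3).const_mul c
  have h12 : Integrable (fun η : Fin m → ℝ => a * ∑ i, η i ^ 2 + b * (∑ i, η i ^ 2) ^ 2)
      (gaussianPi m) := h1.add h2
  refine ⟨h12.add h3, ?_⟩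
  rw [integral_add h12 h3, integral_add h1 h2, integral_const_mul, integral_const_mul,
    integral_const_mul, integral_sum_sq_gaussianPi, integral_sum_sq_sq_gaussianPi,
    integral_sum_sq_pow_three_gaussianPi]

end GaussianPi

section MatrixNorms
variable {m n : ℕ}

lemma sNorm_nonneg (M : Matrix (Fin m) (Fin n) ℝ) : 0 ≤ sNorm M := norm_nonneg _

lemma sum_sq_eq_norm_toLp_sq (v : Fin n → ℝ) : ∑ i, v i ^ 2 = ‖toLp 2 v‖ ^ 2 := by
  simp [EuclideanSpace.norm_sq_eq]

lemma norm_toLp_mulVec_le (M : Matrix (Fin m) (Fin n) ℝ) (v : Fin n → ℝ) :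
    ‖toLp 2 (M *ᵥ v)‖ ≤ sNorm M * ‖toLp 2 v‖ := by
  simpa [sNorm] using
    (LinearMap.toContinuousLinearMap (toEuclideanLin M)).le_opNorm (toLp 2 v)

lemma sum_sq_mulVec_le (M : Matrix (Fin m) (Fin n) ℝ) (v : Fin n → ℝ) :
    ∑ i, (M *ᵥ v) i ^ 2 ≤ sNorm M ^ 2 * ∑ i, v i ^ 2 := by
  rw [sum_sq_eq_norm_toLp_sq, sum_sq_eq_norm_toLp_sq, ← mul_pow]
  gcongr
  exact norm_toLp_mulVec_le M v

lemma dotProduct_mulVec_le (M : Matrix (Fin n) (Fin n) ℝ) (v : Fin n → ℝ) :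
    v ⬝ᵥ M *ᵥ v ≤ sNorm M * ∑ i, v i ^ 2 := by
  calc v ⬝ᵥ M *ᵥ v = inner ℝ (toLp 2 v) (toLp 2 (M *ᵥ v)) := by
        simp [EuclideanSpace.inner_toLp_toLp, dotProduct_comm]
    _ ≤ ‖toLp 2 v‖ * (sNorm M * ‖toLp 2 v‖) :=
        (real_inner_le_norm _ _).trans (by gcongr; exact norm_toLp_mulVec_le M v)
    _ = sNorm M * ∑ i, v i ^ 2 := by rw [sum_sq_eq_norm_toLp_sq]; ring

lemma sum_sq_mulVec_le_fNorm_sq (K : Matrix (Fin m) (Fin n) ℝ) (v : Fin n → ℝ) :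
    ∑ i, (K *ᵥ v) i ^ 2 ≤ fNorm K ^ 2 * ∑ j, v j ^ 2 := by
  rw [fNorm, sq_sqrt (by positivity), sum_mul]
  exact sum_le_sum fun i _ => sum_mul_sq_le_sq_mul_sq univ (K i) v

lemma fNorm_sq_of_mul (c : ℝ) (η : Fin m → ℝ) (x : Fin n → ℝ) :
    fNorm (of fun i j => c * η i * x j) ^ 2 = c ^ 2 * (∑ i, η i ^ 2) * ∑ j, x j ^ 2 := by
  rw [fNorm, sq_sqrt (by positivity)]
  simp only [of_apply, mul_pow, ← mul_sum, ← sum_mul]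

lemma fNorm_sq_of_mul_le {q b σ C : ℝ} (hq : 0 ≤ q) (hqb : q ≤ b) (η : Fin m → ℝ)
    {x : Fin n → ℝ} (hx : ∑ j, x j ^ 2 ≤ C) :
    fNorm (of fun i j => -(1 / σ) * q * η i * x j) ^ 2
      ≤ (1 / σ) ^ 2 * b ^ 2 * (∑ i, η i ^ 2) * C := by
  rw [fNorm_sq_of_mul, neg_mul, neg_sq, mul_pow]
  gcongr

end MatrixNorms

lemma sum_sq_add_le {n : ℕ} (v w : Fin n → ℝ) :
    ∑ i, (v + w) i ^ 2 ≤ 2 * ∑ i, v i ^ 2 + 2 * ∑ i, w i ^ 2 := by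
  rw [mul_sum, mul_sum, ← sum_add_distrib]
  exact sum_le_sum fun i _ => by simp only [Pi.add_apply]; nlinarith [sq_nonneg (v i - w i)]

lemma qFun_nonneg {n m : ℕ} {A Q P : Matrix (Fin n) (Fin n) ℝ} {B : Matrix (Fin n) (Fin m) ℝ}
    {R : Matrix (Fin m) (Fin m) ℝ} (hQ : Q.PosSemidef) (hR : R.PosSemidef) (hP : P.PosSemidef)
    (x : Fin n → ℝ) (u : Fin m → ℝ) : 0 ≤ qFun A Q P B R x u := by
  have hQx := hQ.dotProduct_mulVec_nonneg x
  have hRu := hR.dotProduct_mulVec_nonneg u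
  have hPw := hP.dotProduct_mulVec_nonneg (A *ᵥ x + B *ᵥ u)
  simp only [star_trivial] at hQx hRu hPw
  unfold qFun
  positivity

section QFunction
variable {n m : ℕ} (A Q P : Matrix (Fin n) (Fin n) ℝ) (B : Matrix (Fin n) (Fin m) ℝ)
  (R : Matrix (Fin m) (Fin m) ℝ)

lemma qFun_le (x : Fin n → ℝ) (u : Fin m → ℝ) :
    qFun A Q P B R x u ≤ sNorm Q * ∑ i, x i ^ 2 + sNorm R * ∑ i, u i ^ 2
      + sNorm P * (2 * (sNorm A ^ 2 * ∑ i, x i ^ 2) + 2 * (sNorm B ^ 2 * ∑ i, u i ^ 2)) := by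
  have hw : ∑ i, (A *ᵥ x + B *ᵥ u) i ^ 2
      ≤ 2 * (sNorm A ^ 2 * ∑ i, x i ^ 2) + 2 * (sNorm B ^ 2 * ∑ i, u i ^ 2) :=
    (sum_sq_add_le _ _).trans (by gcongr <;> exact sum_sq_mulVec_le _ _)
  unfold qFun
  gcongr
  · exact dotProduct_mulVec_le Q x
  · exact dotProduct_mulVec_le R u
  · exact (dotProduct_mulVec_le P _).trans (mul_le_mul_of_nonneg_left hw (sNorm_nonneg P))

lemma qFun_feedback_le {c C_m Ctil σ : ℝ} (hP : sNorm P ≤ c) {x : Fin n → ℝ}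
    (hx : ∑ i, x i ^ 2 ≤ C_m) {K : Matrix (Fin m) (Fin n) ℝ} (hK : fNorm K ^ 2 ≤ Ctil)
    (η : Fin m → ℝ) :
    qFun A Q P B R x (-(K *ᵥ x) + σ • η)
      ≤ (sNorm Q + 2 * sNorm R * Ctil + 2 * c * (sNorm A ^ 2 + 2 * sNorm B ^ 2 * Ctil)) * C_m
        + 2 * (sNorm R + 2 * c * sNorm B ^ 2) * σ ^ 2 * ∑ i, η i ^ 2 := by
  have hKx : ∑ i, (K *ᵥ x) i ^ 2 ≤ Ctil * C_m :=
    (sum_sq_mulVec_le_fNorm_sq K x).trans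
      (mul_le_mul hK hx (by positivity) ((sq_nonneg _).trans hK))
  have hu : ∑ i, (-(K *ᵥ x) + σ • η) i ^ 2 ≤ 2 * (Ctil * C_m) + 2 * (σ ^ 2 * ∑ i, η i ^ 2) := by
    refine (sum_sq_add_le _ _).trans ?_
    simp only [Pi.neg_apply, neg_sq, Pi.smul_apply, smul_eq_mul, mul_pow, ← mul_sum]
    gcongr
  refine (qFun_le A Q P B R x _).trans ?_
  have := sNorm_nonneg Q
  have := sNorm_nonneg R
  have := sNorm_nonneg A
  have := sNorm_nonneg B
  have := (sNorm_nonneg P).trans hP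
  calc _ ≤ sNorm Q * C_m + sNorm R * (2 * (Ctil * C_m) + 2 * (σ ^ 2 * ∑ i, η i ^ 2))
        + c * (2 * (sNorm A ^ 2 * C_m)
          + 2 * (sNorm B ^ 2 * (2 * (Ctil * C_m) + 2 * (σ ^ 2 * ∑ i, η i ^ 2)))) := by
        gcongr
    _ = _ := by ring

end QFunction

theorem gradient_estimate_second_moment_general {n m : ℕ}
    (A Q QN Ptil : Matrix (Fin n) (Fin n) ℝ) (B : Matrix (Fin n) (Fin m) ℝ)
    (R : Matrix (Fin m) (Fin m) ℝ)
    (hQ : Q.PosSemidef) (hR : R.PosSemidef)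
    (a : ℝ)
    (hPtil : Ptil.PosSemidef) (hPtilnorm : sNorm Ptil ≤ sNorm QN + a)
    (σ C_m Ctil : ℝ) (hσ : 0 < σ)
    (x₀ : Fin n → ℝ) (hx₀ : ∑ i, (x₀ i) ^ 2 ≤ C_m)
    (K : Matrix (Fin m) (Fin n) ℝ) (hK : fNorm K ^ 2 ≤ Ctil)
    (ξ₁ ξ₂ ξ₃ : ℝ)
    (hξ₁ : ξ₁ = (sNorm Q + 2 * sNorm R * Ctil
      + 2 * (sNorm QN + a) * (sNorm A ^ 2 + 2 * sNorm B ^ 2 * Ctil)) * C_m ^ ((3 : ℝ) / 2))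
    (hξ₂ : ξ₂ = 2 * (sNorm R + 2 * (sNorm QN + a) * sNorm B ^ 2) * C_m ^ ((1 : ℝ) / 2))
    (hξ₃ : ξ₃ = ξ₁ ^ 2 * m / σ ^ 2 + 2 * ξ₁ * ξ₂ * ((m : ℝ) * (m + 2))
      + σ ^ 2 * ξ₂ ^ 2 * ((m : ℝ) * (m + 2) * (m + 4))) :
    (∫ η : Fin m → ℝ,
        fNorm (Matrix.of fun i j =>
          -(1 / σ) * qFun A Q Ptil B R x₀ (-(K.mulVec x₀) + σ • η) * η i * x₀ j) ^ 2
      ∂(Measure.pi fun _ : Fin m => ProbabilityTheory.gaussianReal 0 1)) ≤ ξ₃ := by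
  set κ := sNorm Q + 2 * sNorm R * Ctil
    + 2 * (sNorm QN + a) * (sNorm A ^ 2 + 2 * sNorm B ^ 2 * Ctil)
  set β := 2 * (sNorm R + 2 * (sNorm QN + a) * sNorm B ^ 2)
  have hC : 0 ≤ C_m := (sum_nonneg fun i _ => sq_nonneg (x₀ i)).trans hx₀
  have hξ₁' : ξ₁ = κ * C_m * √C_m := by
    rw [hξ₁, show (3 : ℝ) / 2 = 1 + 1 / 2 by norm_num, rpow_add' hC (by norm_num), rpow_one,
      ← sqrt_eq_rpow, mul_assoc]
  have hξ₂' : ξ₂ = β * √C_m := by rw [hξ₂, ← sqrt_eq_rpow]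
  have hbound (η : Fin m → ℝ) :
      fNorm (of fun i j => -(1 / σ) * qFun A Q Ptil B R x₀ (-(K *ᵥ x₀) + σ • η) * η i * x₀ j) ^ 2
        ≤ ξ₁ ^ 2 / σ ^ 2 * ∑ i, η i ^ 2 + 2 * ξ₁ * ξ₂ * (∑ i, η i ^ 2) ^ 2
          + σ ^ 2 * ξ₂ ^ 2 * (∑ i, η i ^ 2) ^ 3 := by
    refine (fNorm_sq_of_mul_le (qFun_nonneg hQ hR hPtil x₀ _)
      (qFun_feedback_le A Q Ptil B R hPtilnorm hx₀ hK η) η hx₀).trans_eq ?_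
    rw [hξ₁', hξ₂']
    field_simp
    rw [sq_sqrt hC]
    ring
  calc _ ≤ ∫ η, ξ₁ ^ 2 / σ ^ 2 * ∑ i, η i ^ 2 + 2 * ξ₁ * ξ₂ * (∑ i, η i ^ 2) ^ 2
          + σ ^ 2 * ξ₂ ^ 2 * (∑ i, η i ^ 2) ^ 3 ∂gaussianPi m :=
        integral_mono_of_nonneg (ae_of_all _ fun _ => sq_nonneg _)
          (integrable_and_integral_cubic_sum_sq_gaussianPi _ _ _).1 (ae_of_all _ hbound)
    _ = ξ₃ := by
        rw [(integrable_and_integral_cubic_sum_sq_gaussianPi _ _ _).2, hξ₃]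
        ring

/-- Second-moment bound on the one-point gradient estimate. -/
theorem gradient_estimate_second_moment {n m : ℕ}
    (A Q QN Ptil : Matrix (Fin n) (Fin n) ℝ) (B : Matrix (Fin n) (Fin m) ℝ)
    (R : Matrix (Fin m) (Fin m) ℝ)
    (hQ : Q.PosSemidef) (hR : R.PosSemidef) (hQN : QN.IsSymm)
    (a : ℝ) (ha : 0 < a)
    (hPtil : Ptil.PosSemidef) (hPtilnorm : sNorm Ptil ≤ sNorm QN + a)
    (σ C_m Ctil : ℝ) (hσ : 0 < σ) (hCm : 0 < C_m) (hCtil : 0 < Ctil)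
    (x₀ : Fin n → ℝ) (hx₀ : ∑ i, (x₀ i) ^ 2 ≤ C_m)
    (K : Matrix (Fin m) (Fin n) ℝ) (hK : fNorm K ^ 2 ≤ Ctil)
    (ξ₁ ξ₂ ξ₃ : ℝ)
    (hξ₁ : ξ₁ = (sNorm Q + 2 * sNorm R * Ctil
      + 2 * (sNorm QN + a) * (sNorm A ^ 2 + 2 * sNorm B ^ 2 * Ctil)) * C_m ^ ((3 : ℝ) / 2))
    (hξ₂ : ξ₂ = 2 * (sNorm R + 2 * (sNorm QN + a) * sNorm B ^ 2) * C_m ^ ((1 : ℝ) / 2))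
    (hξ₃ : ξ₃ = ξ₁ ^ 2 * m / σ ^ 2 + 2 * ξ₁ * ξ₂ * ((m : ℝ) * (m + 2))
      + σ ^ 2 * ξ₂ ^ 2 * ((m : ℝ) * (m + 2) * (m + 4))) :
    (∫ η : Fin m → ℝ,
        fNorm (Matrix.of fun i j =>
          -(1 / σ) * qFun A Q Ptil B R x₀ (-(K.mulVec x₀) + σ • η) * η i * x₀ j) ^ 2
      ∂(Measure.pi fun _ : Fin m => ProbabilityTheory.gaussianReal 0 1)) ≤ ξ₃ :=
  gradient_estimate_second_moment_general A Q QN Ptil B R hQ hR a hPtil hPtilnorm σ C_m Ctil hσ x₀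
    hx₀ K hK ξ₁ ξ₂ ξ₃ hξ₁ hξ₂ hξ₃
end
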